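/- arXiv:2605.26020 — 2 statements merged into one kernel-verified Lean document; each statement's English description precedes it below -/
import Mathlib

section
/- For positive real T, ∑_{a ≤ T} φ(a) = (3/π²)·T² + O(T log T), where the sum is over natural numbers 1 ≤ a ≤ T. -/
open Finset Real

open ArithmeticFunction


lemma moebius_summable : Summable (fun d : ℕ => (moebius d : ℝ) / (d : ℝ) ^ 2) := by
  apply Summable.of_norm_bounded (g := fun n : ℕ => 1 / (n : ℝ) ^ 2)
    (Real.summable_one_div_nat_pow.mpr one_lt_two)
  intro d
  rw [norm_div, norm_pow]
  rcases eq_or_ne d 0 with rfl | hd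
  · simp
  · rw [Real.norm_natCast, Real.norm_eq_abs]
    apply div_le_div_of_nonneg_right ?_ (by positivity)
    exact_mod_cast abs_moebius_le_one

lemma moebius_hasSum : HasSum (fun d : ℕ => (moebius d : ℝ) / (d : ℝ) ^ 2) (6 / π ^ 2) := by
  obtain ⟨r, hr⟩ := moebius_summable
  have hterm : (fun d : ℕ => (((moebius d : ℝ) / (d : ℝ) ^ 2 : ℝ) : ℂ)) = LSeries.term (fun n => (moebius n : ℂ)) 2 := by
    funext d
    rcases eq_or_ne d 0 with rfl | hd
    · simp [LSeries.term]
    · rw [LSeries.term_of_ne_zero hd]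
      push_cast
      rw [Complex.cpow_ofNat]
  have hC : HasSum (LSeries.term (fun n => (moebius n : ℂ)) 2) ((r : ℝ) : ℂ) := by
    rw [← hterm]
    exact Complex.hasSum_ofReal.mpr hr
  have hL : LSeries (fun n => (moebius n : ℂ)) 2 = ((r : ℝ) : ℂ) := hC.tsum_eq
  have hmul := LSeries_zeta_mul_Lseries_moebius (s := 2) (by norm_num)
  rw [LSeries_zeta_eq_riemannZeta (by norm_num), riemannZeta_two, hL] at hmul
  have hpi : (π : ℂ) ^ 2 ≠ 0 := by
    simpa using Complex.ofReal_ne_zero.mpr Real.pi_ne_zero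
  have : ((r : ℝ) : ℂ) = 6 / (π : ℂ) ^ 2 := by
    field_simp at hmul ⊢
    linear_combination hmul
  have hr6 : r = 6 / π ^ 2 := by
    have h2 : ((r : ℝ) : ℂ) = ((6 / π ^ 2 : ℝ) : ℂ) := by rw [this]; push_cast; ring
    exact_mod_cast h2
  exact hr6 ▸ hr


lemma totient_eq_sum_div (n : ℕ) (hn : 0 < n) :
    (Nat.totient n : ℝ) = ∑ x ∈ n.divisorsAntidiagonal, (moebius x.1 : ℝ) * x.2 := by
  refine ((ArithmeticFunction.sum_eq_iff_sum_mul_moebius_eq (R := ℝ)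
    (f := fun n => (Nat.totient n : ℝ)) (g := fun n => (n : ℝ))).mp ?_ n hn).symm
  intro m _
  exact_mod_cast congrArg (Nat.cast : ℕ → ℝ) (Nat.sum_totient m)

lemma sum_totient_swap (N : ℕ) :
    ∑ a ∈ Icc 1 N, (Nat.totient a : ℝ)
      = ∑ d ∈ Icc 1 N, (moebius d : ℝ) * ∑ q ∈ Icc 1 (N / d), (q : ℝ) := by
  rw [Finset.sum_congr rfl (fun a ha => totient_eq_sum_div a (by
    exact (Finset.mem_Icc.mp ha).1))]
  simp_rw [Finset.mul_sum]
  rw [Finset.sum_sigma', Finset.sum_sigma']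
  refine Finset.sum_nbij' (fun p => ⟨p.2.1, p.2.2⟩) (fun p => ⟨p.1 * p.2, (p.1, p.2)⟩)
    ?_ ?_ ?_ ?_ ?_
  · rintro ⟨a, d, q⟩ hp
    simp only [Finset.mem_sigma, Finset.mem_Icc, Nat.mem_divisorsAntidiagonal] at hp ⊢
    obtain ⟨⟨ha1, ha2⟩, heq, hne⟩ := hp
    have hd : 0 < d := by
      rcases Nat.eq_zero_or_pos d with rfl | h
      · simp at heq; omega
      · exact h
    have hq : 0 < q := by
      rcases Nat.eq_zero_or_pos q with rfl | h
      · simp at heq; omega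
      · exact h
    refine ⟨⟨hd, ?_⟩, hq, ?_⟩
    · calc d ≤ d * q := Nat.le_mul_of_pos_right d hq
        _ = a := heq
        _ ≤ N := ha2
    · rw [Nat.le_div_iff_mul_le hd, mul_comm, heq]
      exact ha2
  · rintro ⟨d, q⟩ hp
    simp only [Finset.mem_sigma, Finset.mem_Icc, Nat.mem_divisorsAntidiagonal] at hp
    obtain ⟨⟨hd1, hd2⟩, hq1, hq2⟩ := hp
    have hdq : d * q ≤ N := by
      have h := (Nat.le_div_iff_mul_le (by omega : 0 < d)).mp hq2
      exact le_trans (le_of_eq (mul_comm d q)) h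
    have hdqpos : 0 < d * q := Nat.mul_pos (by omega) (by omega)
    exact Finset.mem_sigma.mpr ⟨Finset.mem_Icc.mpr ⟨hdqpos, hdq⟩,
      Nat.mem_divisorsAntidiagonal.mpr ⟨rfl, hdqpos.ne'⟩⟩
  · rintro ⟨a, d, q⟩ hp
    simp only [Finset.mem_sigma, Nat.mem_divisorsAntidiagonal] at hp
    simp [hp.2.1]
  · rintro ⟨d, q⟩ _; rfl
  · rintro ⟨a, d, q⟩ _; rfl

lemma sum_Icc_id_real (m : ℕ) : ∑ q ∈ Icc 1 m, (q : ℝ) = m * (m + 1) / 2 := by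
  induction m with
  | zero => simp
  | succ n ih =>
    rw [Finset.sum_Icc_succ_top (by norm_num), ih]
    push_cast; ring


lemma moebius_partial_close (N : ℕ) :
    |∑ d ∈ Icc 1 N, (moebius d : ℝ) / (d : ℝ) ^ 2 - 6 / π ^ 2| ≤ 2 / ((N : ℝ) + 1) := by
  set f : ℕ → ℝ := fun d => (moebius d : ℝ) / (d : ℝ) ^ 2 with hf
  have h0 : ∑ d ∈ Icc 1 N, f d = ∑ d ∈ range (N + 1), f d := by
    rw [show Icc 1 N = Ico 1 (N + 1) from (Finset.Ico_add_one_right_eq_Icc 1 N).symm, Finset.range_eq_Ico,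
      ← Finset.sum_Ico_consecutive f (Nat.zero_le 1) (by omega)]
    simp [hf]
  have key : ∀ M, N + 1 ≤ M →
      |∑ d ∈ range (N + 1), f d - ∑ d ∈ range M, f d| ≤ 2 / ((N : ℝ) + 1) := by
    intro M hM
    rw [abs_sub_comm, ← Finset.sum_Ico_eq_sub _ hM]
    calc |∑ d ∈ Ico (N + 1) M, f d| ≤ ∑ d ∈ Ico (N + 1) M, |f d| :=
          Finset.abs_sum_le_sum_abs _ _
      _ ≤ ∑ d ∈ Ico (N + 1) M, (((d : ℝ)) ^ 2)⁻¹ := by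
          apply Finset.sum_le_sum
          intro i hi
          have hi1 : 1 ≤ i := by simp only [Finset.mem_Ico] at hi; omega
          rw [hf]
          rw [abs_div, abs_pow, Nat.abs_cast, inv_eq_one_div]
          apply div_le_div_of_nonneg_right ?_ (by positivity)
          exact_mod_cast abs_moebius_le_one
      _ = ∑ d ∈ Ioo N M, (((d : ℝ)) ^ 2)⁻¹ := by rw [Finset.Ico_add_one_left_eq_Ioo]
      _ ≤ 2 / ((N : ℝ) + 1) := by exact_mod_cast sum_Ioo_inv_sq_le (α := ℝ) N M
  have hlim : Filter.Tendsto (fun M => |∑ d ∈ range (N + 1), f d - ∑ d ∈ range M, f d|)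
      Filter.atTop (nhds |∑ d ∈ range (N + 1), f d - 6 / π ^ 2|) :=
    (tendsto_const_nhds.sub moebius_hasSum.tendsto_sum_nat).abs
  rw [h0]
  exact le_of_tendsto hlim (Filter.eventually_atTop.mpr ⟨N + 1, key⟩)

/-- `∑_{a ≤ T} φ(a) = (3/π²) T² + O(T log T)`. -/

theorem sum_totient_asymptotic :
    ∃ C : ℝ, 0 < C ∧ ∀ T : ℝ, 2 ≤ T →
      |(∑ a ∈ Finset.Icc 1 ⌊T⌋₊, (Nat.totient a : ℝ)) - 3 / Real.pi ^ 2 * T ^ 2|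
        ≤ C * T * Real.log T := by
  refine ⟨10, by norm_num, ?_⟩
  intro T hT
  set N := ⌊T⌋₊ with hNdef
  have hT0 : (0 : ℝ) < T := by linarith
  have hN1 : 1 ≤ N := by
    rw [hNdef, Nat.le_floor_iff hT0.le]; exact_mod_cast one_le_two.trans hT
  have hN1R : (1 : ℝ) ≤ N := by exact_mod_cast hN1
  have hNT : (N : ℝ) ≤ T := Nat.floor_le hT0.le
  have hTN : T < (N : ℝ) + 1 := Nat.lt_floor_add_one T
  have hlog2 : (0.5 : ℝ) ≤ Real.log 2 := by
    have := Real.log_two_gt_d9; linarith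
  have hlogT : (0.5 : ℝ) ≤ Real.log T :=
    hlog2.trans (Real.log_le_log (by norm_num) hT)
  rw [sum_totient_swap N,
    Finset.sum_congr rfl (fun d _ => by rw [sum_Icc_id_real (N / d)])]
  have habs := abs_sub_le
    (∑ d ∈ Icc 1 N, (moebius d : ℝ) * (((N / d : ℕ) : ℝ) * (((N / d : ℕ) : ℝ) + 1) / 2))
    (∑ d ∈ Icc 1 N, (moebius d : ℝ) * ((T / d) ^ 2 / 2))
    (3 / π ^ 2 * T ^ 2)
  refine habs.trans ?_
  have hb1 : |∑ d ∈ Icc 1 N, (moebius d : ℝ) * (((N / d : ℕ) : ℝ) * (((N / d : ℕ) : ℝ) + 1) / 2)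
      - ∑ d ∈ Icc 1 N, (moebius d : ℝ) * ((T / d) ^ 2 / 2)| ≤ 6 * T * Real.log T := by
    rw [← Finset.sum_sub_distrib]
    refine (Finset.abs_sum_le_sum_abs _ _).trans ?_
    have hterm : ∀ d ∈ Icc 1 N,
        |(moebius d : ℝ) * (((N / d : ℕ) : ℝ) * (((N / d : ℕ) : ℝ) + 1) / 2)
          - (moebius d : ℝ) * ((T / d) ^ 2 / 2)| ≤ (2 * T) * ((d : ℝ))⁻¹ := by
      intro d hd
      obtain ⟨hd1, hd2⟩ := Finset.mem_Icc.mp hd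
      have hdpos : (0 : ℝ) < d := by exact_mod_cast hd1
      have hdT : (d : ℝ) ≤ T := le_trans (by exact_mod_cast hd2) hNT
      have hx1 : 1 ≤ T / d := (le_div_iff₀ hdpos).mpr (by linarith)
      have hmfloor : (N / d : ℕ) = ⌊T / d⌋₊ := (Nat.floor_div_natCast T d).symm
      have hm_le : ((N / d : ℕ) : ℝ) ≤ T / d := by
        rw [hmfloor]; exact Nat.floor_le (by positivity)
      have hm_lt : T / d < ((N / d : ℕ) : ℝ) + 1 := by
        rw [hmfloor]; exact Nat.lt_floor_add_one _
      rw [← mul_sub, abs_mul]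
      have hmu : |(moebius d : ℝ)| ≤ 1 := by exact_mod_cast abs_moebius_le_one
      have h0 : (0 : ℝ) ≤ ((N / d : ℕ) : ℝ) := Nat.cast_nonneg _
      have hA : |((N / d : ℕ) : ℝ) * (((N / d : ℕ) : ℝ) + 1) / 2 - (T / d) ^ 2 / 2|
          ≤ 2 * (T / d) := by
        rw [abs_le]
        constructor <;> nlinarith [sq_nonneg (T / d - ((N / d : ℕ) : ℝ))]
      calc |(moebius d : ℝ)| * |((N / d : ℕ) : ℝ) * (((N / d : ℕ) : ℝ) + 1) / 2 - (T / d) ^ 2 / 2|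
          ≤ 1 * (2 * (T / d)) := mul_le_mul hmu hA (abs_nonneg _) one_pos.le
        _ = (2 * T) * ((d : ℝ))⁻¹ := by field_simp
    refine (Finset.sum_le_sum hterm).trans ?_
    rw [← Finset.mul_sum]
    have hH : ∑ d ∈ Icc 1 N, ((d : ℝ))⁻¹ ≤ 1 + Real.log N := by
      have h1 := harmonic_le_one_add_log N
      have heq : ((harmonic N : ℚ) : ℝ) = ∑ d ∈ Icc 1 N, ((d : ℝ))⁻¹ := by
        rw [harmonic_eq_sum_Icc]; push_cast; rfl
      linarith [heq ▸ h1]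
    have hlogN : Real.log N ≤ Real.log T := Real.log_le_log (by positivity) hNT
    calc (2 * T) * ∑ d ∈ Icc 1 N, ((d : ℝ))⁻¹ ≤ (2 * T) * (1 + Real.log T) := by
          apply mul_le_mul_of_nonneg_left ?_ (by positivity)
          linarith
      _ ≤ 6 * T * Real.log T := by nlinarith
  have hb2 : |∑ d ∈ Icc 1 N, (moebius d : ℝ) * ((T / d) ^ 2 / 2) - 3 / π ^ 2 * T ^ 2|
      ≤ 2 * T * Real.log T := by
    have hre : ∀ d ∈ Icc 1 N, (moebius d : ℝ) * ((T / d) ^ 2 / 2)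
        = T ^ 2 / 2 * ((moebius d : ℝ) / (d : ℝ) ^ 2) := by
      intro d hd
      have hd1 := (Finset.mem_Icc.mp hd).1
      have hdpos : (0 : ℝ) < d := by exact_mod_cast hd1
      field_simp
    rw [Finset.sum_congr rfl hre, ← Finset.mul_sum]
    have h3 : 3 / π ^ 2 * T ^ 2 = T ^ 2 / 2 * (6 / π ^ 2) := by
      have := Real.pi_ne_zero; field_simp; ring
    rw [h3, ← mul_sub, abs_mul]
    have hTpos2 : |T ^ 2 / 2| = T ^ 2 / 2 := abs_of_nonneg (by positivity)
    rw [hTpos2]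
    calc T ^ 2 / 2 * |∑ d ∈ Icc 1 N, (moebius d : ℝ) / (d : ℝ) ^ 2 - 6 / π ^ 2|
        ≤ T ^ 2 / 2 * (2 / ((N : ℝ) + 1)) :=
          mul_le_mul_of_nonneg_left (moebius_partial_close N) (by positivity)
      _ ≤ T := by
          have hNpos : (0 : ℝ) < (N : ℝ) + 1 := by positivity
          rw [show T ^ 2 / 2 * (2 / ((N : ℝ) + 1)) = T ^ 2 / ((N : ℝ) + 1) from by ring,
            div_le_iff₀ hNpos]
          nlinarith
      _ ≤ 2 * T * Real.log T := by nlinarith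
  nlinarith
end

section
/- The Möbius transformation z ↦ −1/(z+1), given by the SL₂(ℤ) matrix [[0,−1],[1,1]], maps the arc {e^{iθ} : π/2 ≤ θ ≤ 2π/3} of the unit circle bijectively onto the vertical segment {−1/2 + iy : 1/2 ≤ y ≤ √3/2} in the upper half plane. -/
open Complex Real Set

set_option maxHeartbeats 1600000 in
/-- The Möbius transformation `z ↦ -1/(z+1)` maps the arc
`{e^{iθ} : π/2 ≤ θ ≤ 2π/3}` bijectively onto `{-1/2 + iy : 1/2 ≤ y ≤ √3/2}`. -/
theorem mobius_maps_arc_to_segment :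
    Set.BijOn (fun z : ℂ => -1 / (z + 1))
      {z : ℂ | ∃ θ : ℝ, θ ∈ Set.Icc (Real.pi / 2) (2 * Real.pi / 3) ∧
        z = Complex.exp (θ * Complex.I)}
      {z : ℂ | z.re = -1/2 ∧ z.im ∈ Set.Icc (1/2 : ℝ) (Real.sqrt 3 / 2)} := by
  have hpi : (0:ℝ) < Real.pi := Real.pi_pos
  have hc3 : Real.cos (2 * Real.pi / 3) = -1/2 := by
    rw [show 2 * Real.pi / 3 = Real.pi - Real.pi / 3 by ring, Real.cos_pi_sub,
      Real.cos_pi_div_three]; norm_num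
  have hexp : ∀ θ : ℝ, Complex.exp (θ * Complex.I)
      = (Real.cos θ : ℂ) + (Real.sin θ : ℂ) * Complex.I := by
    intro θ
    rw [Complex.exp_mul_I, ← Complex.ofReal_cos, ← Complex.ofReal_sin]
  have basics : ∀ θ : ℝ, θ ∈ Set.Icc (Real.pi / 2) (2 * Real.pi / 3) →
      0 ≤ Real.sin θ ∧ Real.cos θ ≤ 0 ∧ -1/2 ≤ Real.cos θ := by
    intro θ hθ
    refine ⟨Real.sin_nonneg_of_nonneg_of_le_pi (by linarith [hθ.1]) (by linarith [hθ.2]), ?_, ?_⟩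
    · exact Real.cos_nonpos_of_pi_div_two_le_of_le hθ.1 (by linarith [hθ.2])
    · rw [← hc3]
      exact Real.cos_le_cos_of_nonneg_of_le_pi (by linarith [hθ.1]) (by linarith [hθ.2]) hθ.2
  have hzne : ∀ θ : ℝ, θ ∈ Set.Icc (Real.pi / 2) (2 * Real.pi / 3) →
      Complex.exp (θ * Complex.I) + 1 ≠ 0 := by
    intro θ hθ h
    obtain ⟨hs, hc1, hc2⟩ := basics θ hθ
    rw [hexp] at h
    have h2 := congrArg Complex.re h
    simp only [Complex.add_re, Complex.ofReal_re, Complex.mul_re, Complex.ofReal_im,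
      Complex.I_re, Complex.I_im, Complex.one_re, Complex.zero_re] at h2
    simp at h2
    linarith
  -- image formula for the forward map
  have himg : ∀ θ : ℝ, θ ∈ Set.Icc (Real.pi / 2) (2 * Real.pi / 3) →
      -1 / (Complex.exp (θ * Complex.I) + 1)
        = ((-1/2 : ℝ) : ℂ) + ((Real.sin θ / (2 * (1 + Real.cos θ)) : ℝ) : ℂ) * Complex.I := by
    intro θ hθ
    obtain ⟨hs, hc1, hc2⟩ := basics θ hθ
    have hpyth := Real.sin_sq_add_cos_sq θ
    have h1c : (0:ℝ) < 1 + Real.cos θ := by linarith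
    have hne := hzne θ hθ
    rw [hexp] at hne ⊢
    rw [div_eq_iff hne]
    simp only [Complex.ext_iff, Complex.add_re, Complex.add_im, Complex.mul_re, Complex.mul_im,
      Complex.ofReal_re, Complex.ofReal_im, Complex.I_re, Complex.I_im, Complex.neg_re,
      Complex.neg_im, Complex.one_re, Complex.one_im]
    constructor <;> (field_simp; nlinarith [hpyth])
  -- formula for the inverse map
  have ginv : ∀ y : ℝ, 1/2 ≤ y →
      -1 / (((-1/2 : ℝ):ℂ) + (y:ℂ) * Complex.I) - 1
        = (((1/4 - y^2)/(1/4 + y^2) : ℝ) : ℂ) + ((y/(1/4 + y^2) : ℝ) : ℂ) * Complex.I := by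
    intro y hy1
    have hd : (0:ℝ) < 1/4 + y^2 := by nlinarith
    have hne : ((-1/2 : ℝ):ℂ) + (y:ℂ) * Complex.I ≠ 0 := by
      intro h
      have := congrArg Complex.re h
      simp at this
    rw [sub_eq_iff_eq_add, div_eq_iff hne]
    simp only [Complex.ext_iff, Complex.add_re, Complex.add_im, Complex.mul_re, Complex.mul_im,
      Complex.ofReal_re, Complex.ofReal_im, Complex.I_re, Complex.I_im, Complex.neg_re,
      Complex.neg_im, Complex.one_re, Complex.one_im]
    constructor <;> (field_simp; ring)
  have h3 : Real.sqrt 3 ^ 2 = 3 := Real.sq_sqrt (by norm_num)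
  have h3n : (0:ℝ) ≤ Real.sqrt 3 := Real.sqrt_nonneg 3
  apply Set.InvOn.bijOn (f' := fun w : ℂ => -1 / w - 1)
  · constructor
    · -- LeftInvOn
      rintro z ⟨θ, hθ, rfl⟩
      have hne := hzne θ hθ
      show -1 / (-1 / (Complex.exp (θ * Complex.I) + 1)) - 1 = _
      field_simp
      ring
    · -- RightInvOn
      rintro w ⟨hre, _⟩
      have hw0 : w ≠ 0 := by
        intro h; rw [h] at hre; simp at hre; linarith
      show -1 / (-1 / w - 1 + 1) = w
      field_simp
      ring
  · -- MapsTo forward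
    rintro z ⟨θ, hθ, rfl⟩
    obtain ⟨hs, hc1, hc2⟩ := basics θ hθ
    have hpyth := Real.sin_sq_add_cos_sq θ
    have h1c : (0:ℝ) < 1 + Real.cos θ := by linarith
    have key := himg θ hθ
    have h3p : (0:ℝ) < Real.sqrt 3 := Real.sqrt_pos.mpr (by norm_num)
    constructor
    · show (-1 / (Complex.exp (θ * Complex.I) + 1)).re = -1/2
      rw [key]
      simp only [Complex.add_re, Complex.ofReal_re, Complex.mul_re, Complex.ofReal_im,
        Complex.I_re, Complex.I_im]
      ring
    · show (-1 / (Complex.exp (θ * Complex.I) + 1)).im ∈ Set.Icc (1/2 : ℝ) (Real.sqrt 3 / 2)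
      rw [key]
      have him2 : (((-1/2 : ℝ) : ℂ)
          + ((Real.sin θ / (2 * (1 + Real.cos θ)) : ℝ) : ℂ) * Complex.I).im
          = Real.sin θ / (2 * (1 + Real.cos θ)) := by
        simp only [Complex.add_im, Complex.ofReal_im, Complex.mul_im, Complex.ofReal_re,
          Complex.I_im, Complex.I_re]
        ring
      rw [him2]
      have hsum : (0:ℝ) < Real.sin θ + 1 + Real.cos θ := by linarith
      have hsum2 : (0:ℝ) < Real.sin θ + Real.sqrt 3 * (1 + Real.cos θ) := by nlinarith
      have hprod : (0:ℝ) ≤ (1 + Real.cos θ) * (2 + 4 * Real.cos θ) := by nlinarith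
      constructor
      · rw [le_div_iff₀ (by linarith)]
        nlinarith [hpyth, hsum, mul_nonneg (neg_nonneg.2 hc1) h1c.le]
      · rw [div_le_div_iff₀ (by linarith) (by norm_num : (0:ℝ) < 2)]
        nlinarith [hpyth, h3, hsum2, hprod]
  · -- MapsTo backward
    rintro w ⟨hre, him⟩
    obtain ⟨hy1, hy2⟩ := him
    have hw : w = ((-1/2 : ℝ):ℂ) + ((w.im : ℝ):ℂ) * Complex.I := by
      apply Complex.ext <;> simp [hre]
    generalize hygen : w.im = y at *
    have hy0 : (0:ℝ) < y := by linarith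
    have hd : (0:ℝ) < 1/4 + y^2 := by positivity
    have hy2' : y^2 ≤ 3/4 := by nlinarith [h3, h3n]
    have hx1 : -1 ≤ (1/4 - y^2)/(1/4 + y^2) := by
      rw [le_div_iff₀ hd]; nlinarith
    have hx0 : (1/4 - y^2)/(1/4 + y^2) ≤ 0 := by
      exact div_nonpos_iff.mpr (Or.inr ⟨by nlinarith, hd.le⟩)
    have hxh : -1/2 ≤ (1/4 - y^2)/(1/4 + y^2) := by
      rw [le_div_iff₀ hd]; nlinarith
    refine ⟨Real.arccos ((1/4 - y^2)/(1/4 + y^2)), ⟨?_, ?_⟩, ?_⟩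
    · rw [← Real.arccos_zero]
      exact Real.strictAntiOn_arccos.antitoneOn ⟨hx1, by linarith⟩ (by norm_num) hx0
    · have h23 : Real.arccos (-1/2) = 2*Real.pi/3 := by
        rw [show (-1/2 : ℝ) = Real.cos (2*Real.pi/3) from hc3.symm]
        exact Real.arccos_cos (by positivity) (by linarith)
      rw [← h23]
      exact Real.strictAntiOn_arccos.antitoneOn (by norm_num) ⟨hx1, by linarith⟩ hxh
    · have hsin : Real.sin (Real.arccos ((1/4 - y^2)/(1/4 + y^2))) = y/(1/4 + y^2) := by
        rw [Real.sin_arccos]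
        have h1 : 1 - ((1/4 - y^2)/(1/4 + y^2))^2 = (y/(1/4 + y^2))^2 := by
          field_simp
          ring
        rw [h1, Real.sqrt_sq (by positivity)]
      show -1 / w - 1 = _
      rw [hw, hexp, Real.cos_arccos hx1 (by linarith), hsin, ginv y hy1]
end
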